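/- For a prime p and integer n ≥ 3, the lambda-number of the zero-divisor graph Γ(Z_{p^n}) equals p^{n-1} + p - 3. -/

import Mathlib

/-!
A nonzero zero-divisor of `ℤ/p^n` is `p * j` with `1 ≤ j < p^(n-1)`, and `p * j ~ p * j'` iff
`p^(n-2) ∣ j * j'`. The `p - 1` multiples of `p^(n-2)` are universal vertices, so the graph has
diameter two and an L(2,1)-labelling is an injective labelling in which neighbours differ by at
least `2`.

Lower bound: a universal label differs by at least `2` from every other label, so the value next
to it on the side of a fixed non-universal label is unused. This gives `|U|` unused values in
`[0, λ]`, hence `λ + 1 ≥ |V| + |U|`.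

Upper bound: label the non-universal vertices `0, 1, 2, …` in increasing order of `j`. Two of
them can only be adjacent if both `j` are multiples of `p`, and then the non-universal `j + 1`
lies between them. The universal vertices get
`p^(n-1) - p + 1, p^(n-1) - p + 3, …, p^(n-1) + p - 3`.
-/

/-- An L(2,1)-labelling: adjacent vertices get labels differing by at least 2,
vertices at distance exactly two get different labels. -/
def IsL21Labelling {V : Type*} (G : SimpleGraph V) (f : V → ℕ) : Prop :=
  (∀ u v, G.Adj u v → 2 ≤ |(f u : ℤ) - (f v : ℤ)|) ∧
  ∀ u v, G.dist u v = 2 → f u ≠ f v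

/-- The lambda-number: the least `k` such that `G` has an L(2,1)-labelling with
labels in `{0, ..., k}` (equivalently, the minimum span). -/
noncomputable def lambdaNumber {V : Type*} (G : SimpleGraph V) : ℕ :=
  sInf {k | ∃ f : V → ℕ, IsL21Labelling G f ∧ ∀ v, f v ≤ k}

/-- The nonzero zero-divisors of `R`. -/
def zdVertices (R : Type*) [CommRing R] : Set R :=
  {x | x ≠ 0 ∧ ∃ y : R, y ≠ 0 ∧ x * y = 0}

/-- The zero-divisor graph of `R`: vertices are nonzero zero-divisors,
distinct `x, y` adjacent iff `x * y = 0`. -/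
def zdGraph (R : Type*) [CommRing R] : SimpleGraph (zdVertices R) where
  Adj x y := x ≠ y ∧ (x : R) * (y : R) = 0
  symm := by
    constructor
    rintro x y ⟨h1, h2⟩
    exact ⟨h1.symm, by rwa [mul_comm] at h2⟩
  loopless := by constructor; rintro x ⟨h, _⟩; exact h rfl

/-- Beck's zero-divisor graph of `R`: vertices are all of `R`,
distinct `x, y` adjacent iff `x * y = 0`. -/
def beckGraph (R : Type*) [CommRing R] : SimpleGraph R where
  Adj x y := x ≠ y ∧ x * y = 0
  symm := by
    constructor
    rintro x y ⟨h1, h2⟩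
    exact ⟨h1.symm, by rwa [mul_comm] at h2⟩
  loopless := by constructor; rintro x ⟨h, _⟩; exact h rfl

open Finset Function

theorem SimpleGraph.dist_eq_two_of_adj_of_adj {V : Type*} {G : SimpleGraph V} {u v w : V}
    (hne : u ≠ v) (hnadj : ¬ G.Adj u v) (huw : G.Adj u w) (hwv : G.Adj w v) : G.dist u v = 2 := by
  have hle : G.dist u v ≤ 2 := G.dist_le (.cons huw (.cons hwv .nil))
  have h0 : G.dist u v ≠ 0 :=
    SimpleGraph.dist_ne_zero_iff_ne_and_reachable.2 ⟨hne, ⟨.cons huw (.cons hwv .nil)⟩⟩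
  have h1 : G.dist u v ≠ 1 := fun h => hnadj (SimpleGraph.dist_eq_one_iff_adj.1 h)
  omega

theorem two_le_abs_natCast_sub_iff {a b : ℕ} :
    (2 : ℤ) ≤ |(a : ℤ) - b| ↔ a + 2 ≤ b ∨ b + 2 ≤ a := by
  rw [le_abs']
  omega

section Labelling

variable {V : Type*} {G : SimpleGraph V} {f : V → ℕ}

theorem IsL21Labelling.of_injective (hf : Injective f)
    (hadj : ∀ u v, G.Adj u v → f u + 2 ≤ f v ∨ f v + 2 ≤ f u) : IsL21Labelling G f := by
  refine ⟨fun u v h => two_le_abs_natCast_sub_iff.2 (hadj u v h), fun u v h heq => ?_⟩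
  obtain rfl := hf heq
  simp at h

theorem IsL21Labelling.injective (hf : IsL21Labelling G f) {w : V}
    (hw : ∀ v, v ≠ w → G.Adj w v) : Injective f := by
  intro u v heq
  by_contra hne
  by_cases hadj : G.Adj u v
  · have := two_le_abs_natCast_sub_iff.1 (hf.1 u v hadj)
    omega
  · have huw : u ≠ w := by
      rintro rfl
      exact hadj (hw v (Ne.symm hne))
    have hvw : v ≠ w := by
      rintro rfl
      exact hadj (hw u hne).symm
    exact hf.2 u v (G.dist_eq_two_of_adj_of_adj hne hadj (hw u huw).symm (hw v hvw)) heq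

theorem card_add_card_le_of_separated [Fintype V] (hf : Injective f) {K : ℕ}
    (hK : ∀ v, f v ≤ K) {U : Finset V} {x : V} (hx : x ∉ U)
    (hsep : ∀ u ∈ U, ∀ v, v ≠ u → f u + 2 ≤ f v ∨ f v + 2 ≤ f u) :
    Fintype.card V + #U ≤ K + 1 := by
  classical
  set σ : V → ℕ := fun u => if f u < f x then f u + 1 else f u - 1
  have hside : ∀ u ∈ U, (f u + 2 ≤ f x ∧ σ u = f u + 1) ∨ (f x + 2 ≤ f u ∧ σ u = f u - 1) := by
    intro u hu
    have hux : x ≠ u := fun h => hx (h ▸ hu)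
    rcases hsep u hu x hux with h | h
    · exact Or.inl ⟨h, if_pos (by omega)⟩
    · exact Or.inr ⟨h, if_neg (by omega)⟩
  have hdisj : Disjoint (univ.image f) (U.image σ) := by
    simp only [disjoint_left, mem_image, mem_univ, true_and, not_exists, not_and]
    rintro _ ⟨v, rfl⟩ u hu heq
    have := hside u hu
    by_cases hvu : v = u
    · subst hvu
      omega
    · have := hsep u hu v hvu
      omega
  have hinj : Set.InjOn σ U := by
    intro u hu u' hu' heq
    by_contra hne
    have := hsep u hu u' (Ne.symm hne)
    have := hside u hu
    have := hside u' hu'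
    omega
  have hsub : univ.image f ∪ U.image σ ⊆ range (K + 1) := by
    intro l
    simp only [mem_union, mem_image, mem_univ, true_and, mem_range]
    rintro (⟨v, rfl⟩ | ⟨u, hu, rfl⟩)
    · exact Nat.lt_succ_of_le (hK v)
    · have := hside u hu
      have := hK u
      have := hK x
      omega
  calc Fintype.card V + #U = #(univ.image f) + #(U.image σ) := by
        rw [card_image_of_injective _ hf, card_image_of_injOn hinj, card_univ]
    _ = #(univ.image f ∪ U.image σ) := (card_union_of_disjoint hdisj).symm
    _ ≤ K + 1 := by simpa using card_le_card hsub

theorem IsL21Labelling.card_add_card_le [Fintype V] (hf : IsL21Labelling G f) {K : ℕ}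
    (hK : ∀ v, f v ≤ K) {U : Finset V} (hU : ∀ u ∈ U, ∀ v, v ≠ u → G.Adj u v) {w x : V}
    (hw : w ∈ U) (hx : x ∉ U) : Fintype.card V + #U ≤ K + 1 :=
  card_add_card_le_of_separated (hf.injective fun v hv => hU w hw v hv) hK hx
    fun u hu v hv => two_le_abs_natCast_sub_iff.1 (hf.1 u v (hU u hu v hv))

end Labelling

namespace Nat

theorem count_not_dvd_self (a : ℕ) : count (fun i => ¬ a ∣ i) a = a - 1 := by
  rcases a with _ | b
  · simp
  · rw [count_succ', if_neg (by simp), add_zero, Nat.add_sub_cancel]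
    exact count_of_forall fun k hk => Nat.not_dvd_of_pos_of_lt k.succ_pos (by omega)

theorem count_not_dvd_mul (a c : ℕ) : count (fun i => ¬ a ∣ i) (c * a) = c * (a - 1) := by
  induction c with
  | zero => simp
  | succ c ih =>
    rw [add_mul, one_mul, count_add, ih]
    simp_rw [Nat.dvd_add_right (dvd_mul_left a c), count_not_dvd_self]
    ring

theorem card_filter_dvd_Ico_one_mul {a : ℕ} (ha : 0 < a) (c : ℕ) :
    #{x ∈ Ico 1 (c * a) | a ∣ x} = c - 1 := by
  have hIco : Ico 1 (c * a) = Ioc 0 (c * a - 1) := by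
    ext x
    simp only [mem_Ico, mem_Ioc]
    omega
  rw [hIco, Ioc_filter_dvd_card_eq_div]
  rcases c with _ | c
  · simp
  · rw [Nat.add_sub_cancel, add_mul, one_mul]
    exact Nat.div_eq_of_lt_le (by omega) (by rw [add_mul, one_mul]; omega)

theorem count_not_dvd_add_two_le {a p j j' : ℕ} (hp : 2 ≤ p) (hpa : p ∣ a) (hj : p ∣ j)
    (hj' : p ∣ j') (ha : ¬ a ∣ j) (hlt : j < j') :
    count (fun i => ¬ a ∣ i) j + 2 ≤ count (fun i => ¬ a ∣ i) j' := by
  have hsucc : ¬ a ∣ j + 1 := fun h => by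
    have := Nat.le_of_dvd one_pos ((Nat.dvd_add_right hj).1 (hpa.trans h))
    omega
  have hgap : p ≤ j' - j := Nat.le_of_dvd (by omega) (Nat.dvd_sub hj' hj)
  have h1 := count_strict_mono (p := fun i => ¬ a ∣ i) ha (lt_add_one j)
  have h2 := count_strict_mono (p := fun i => ¬ a ∣ i) hsucc (show j + 1 < j' by omega)
  omega

end Nat

section PowDvdGraph

variable {p k : ℕ}

def powDvdLabel (p k j : ℕ) : ℕ :=
  if p ^ k ∣ j then p ^ (k + 1) - p - 1 + 2 * (j / p ^ k) else Nat.count (fun i => ¬ p ^ k ∣ i) j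

theorem powDvdLabel_add_lt_of_not_dvd (hp : 0 < p) {j : ℕ} (hj : j < p ^ (k + 1))
    (h : ¬ p ^ k ∣ j) : powDvdLabel p k j + p < p ^ (k + 1) := by
  have hcount := Nat.count_strict_mono (p := fun i => ¬ p ^ k ∣ i) h hj
  rw [pow_succ', Nat.count_not_dvd_mul, Nat.mul_sub_one] at hcount
  have : p ≤ p * p ^ k := Nat.le_mul_of_pos_right p (pow_pos hp k)
  rw [powDvdLabel, if_neg h, pow_succ']
  omega

theorem powDvdLabel_bounds_of_dvd (hp : 2 ≤ p) (hk : 1 ≤ k) {j : ℕ}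
    (hj : j ∈ Set.Ico 1 (p ^ (k + 1))) (h : p ^ k ∣ j) :
    p ^ (k + 1) - p + 1 ≤ powDvdLabel p k j ∧ powDvdLabel p k j ≤ p ^ (k + 1) + p - 3 := by
  have hpk : 0 < p ^ k := pow_pos (by omega) k
  obtain ⟨c, rfl⟩ := h
  have hc1 : 1 ≤ c := Nat.pos_of_ne_zero (by rintro rfl; simp at hj)
  have hcp : c < p := by
    have := hj.2
    rw [pow_succ] at this
    exact Nat.lt_of_mul_lt_mul_left this
  have hN : p * p ≤ p ^ (k + 1) := by
    rw [pow_succ']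
    exact Nat.mul_le_mul_left p (Nat.le_self_pow (by omega) p)
  have h2p : 2 * p ≤ p * p := Nat.mul_le_mul_right p hp
  rw [powDvdLabel, if_pos (dvd_mul_right _ _), Nat.mul_div_cancel_left c hpk]
  omega

theorem powDvdLabel_separated_of_dvd (hp : 2 ≤ p) (hk : 1 ≤ k) {j j' : ℕ}
    (hj : j ∈ Set.Ico 1 (p ^ (k + 1))) (hj' : j' ∈ Set.Ico 1 (p ^ (k + 1))) (hne : j ≠ j')
    (h : p ^ k ∣ j) :
    powDvdLabel p k j + 2 ≤ powDvdLabel p k j' ∨ powDvdLabel p k j' + 2 ≤ powDvdLabel p k j := by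
  by_cases h' : p ^ k ∣ j'
  · have hpk : 0 < p ^ k := pow_pos (by omega) k
    obtain ⟨c, rfl⟩ := h
    obtain ⟨c', rfl⟩ := h'
    have hcc : c ≠ c' := by
      rintro rfl
      exact hne rfl
    simp only [powDvdLabel, if_pos (dvd_mul_right _ _), Nat.mul_div_cancel_left _ hpk]
    omega
  · have := powDvdLabel_bounds_of_dvd hp hk hj h
    have := powDvdLabel_add_lt_of_not_dvd (by omega) hj'.2 h'
    omega

theorem powDvdLabel_injOn (hp : 2 ≤ p) (hk : 1 ≤ k) :
    Set.InjOn (powDvdLabel p k) (Set.Ico 1 (p ^ (k + 1))) := by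
  intro j hj j' hj' heq
  by_contra hne
  by_cases h : p ^ k ∣ j
  · have := powDvdLabel_separated_of_dvd hp hk hj hj' hne h
    omega
  by_cases h' : p ^ k ∣ j'
  · have := powDvdLabel_separated_of_dvd hp hk hj' hj (Ne.symm hne) h'
    omega
  simp only [powDvdLabel, if_neg h, if_neg h'] at heq
  exact hne (Nat.count_injective h h' heq)

theorem powDvdLabel_separated_of_dvd_mul (hp : p.Prime) (hk : 1 ≤ k) {j j' : ℕ}
    (hj : j ∈ Set.Ico 1 (p ^ (k + 1))) (hj' : j' ∈ Set.Ico 1 (p ^ (k + 1))) (hne : j ≠ j')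
    (h : p ^ k ∣ j * j') :
    powDvdLabel p k j + 2 ≤ powDvdLabel p k j' ∨ powDvdLabel p k j' + 2 ≤ powDvdLabel p k j := by
  by_cases hu : p ^ k ∣ j
  · exact powDvdLabel_separated_of_dvd hp.two_le hk hj hj' hne hu
  by_cases hu' : p ^ k ∣ j'
  · exact (powDvdLabel_separated_of_dvd hp.two_le hk hj' hj (Ne.symm hne) hu').symm
  have hcop : ∀ {i}, ¬ p ∣ i → Nat.Coprime (p ^ k) i := fun hi =>
    Nat.Coprime.pow_left k ((Nat.Prime.coprime_iff_not_dvd hp).2 hi)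
  have hpj : p ∣ j := by
    by_contra hpj
    exact hu' ((hcop hpj).dvd_of_dvd_mul_left h)
  have hpj' : p ∣ j' := by
    by_contra hpj'
    exact hu ((hcop hpj').dvd_of_dvd_mul_right h)
  have hpa : p ∣ p ^ k := dvd_pow_self p (by omega)
  simp only [powDvdLabel, if_neg hu, if_neg hu']
  rcases Nat.lt_or_gt_of_ne hne with hlt | hlt
  · exact Or.inl (Nat.count_not_dvd_add_two_le hp.two_le hpa hpj hpj' hu hlt)
  · exact Or.inr (Nat.count_not_dvd_add_two_le hp.two_le hpa hpj' hpj hu' hlt)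

theorem powDvdLabel_le (hp : 2 ≤ p) (hk : 1 ≤ k) {j : ℕ} (hj : j ∈ Set.Ico 1 (p ^ (k + 1))) :
    powDvdLabel p k j ≤ p ^ (k + 1) + p - 3 := by
  by_cases h : p ^ k ∣ j
  · exact (powDvdLabel_bounds_of_dvd hp hk hj h).2
  · have := powDvdLabel_add_lt_of_not_dvd (by omega) hj.2 h
    omega

theorem lambdaNumber_eq_of_adj_iff_pow_dvd {V : Type*} [Fintype V] {G : SimpleGraph V}
    (hp : p.Prime) (hk : 1 ≤ k) {ι : V → ℕ} (hι : Injective ι)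
    (hrange : Set.range ι = Set.Ico 1 (p ^ (k + 1)))
    (hadj : ∀ u v, G.Adj u v ↔ u ≠ v ∧ p ^ k ∣ ι u * ι v) :
    lambdaNumber G = p ^ (k + 1) + p - 3 := by
  classical
  have hp2 := hp.two_le
  have hmem : ∀ v, ι v ∈ Set.Ico 1 (p ^ (k + 1)) := fun v => hrange ▸ Set.mem_range_self v
  refine IsLeast.csInf_eq ⟨⟨powDvdLabel p k ∘ ι, ?_, fun v => powDvdLabel_le hp2 hk (hmem v)⟩, ?_⟩
  · refine IsL21Labelling.of_injective
      (fun u v h => hι (powDvdLabel_injOn hp2 hk (hmem u) (hmem v) h)) fun u v huv => ?_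
    obtain ⟨hne, hdvd⟩ := (hadj u v).1 huv
    exact powDvdLabel_separated_of_dvd_mul hp hk (hmem u) (hmem v) (hι.ne hne) hdvd
  rintro K ⟨g, hg, hgK⟩
  have hpk : 1 < p ^ k := Nat.one_lt_pow (by omega) hp.one_lt
  have hkN : p ^ k < p ^ (k + 1) := Nat.pow_lt_pow_right hp.one_lt (lt_add_one k)
  obtain ⟨w, hw⟩ : p ^ k ∈ Set.range ι := hrange ▸ ⟨hpk.le, hkN⟩
  obtain ⟨x, hx⟩ : 1 ∈ Set.range ι := hrange ▸ ⟨le_rfl, hpk.trans hkN⟩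
  set U := univ.filter fun v => p ^ k ∣ ι v
  have himage : univ.image ι = Ico 1 (p ^ (k + 1)) := by
    ext j
    simp only [mem_image, mem_univ, true_and, Finset.mem_Ico, ← Set.mem_Ico, ← hrange,
      Set.mem_range]
  have hcardV : Fintype.card V = p ^ (k + 1) - 1 := by
    rw [← card_univ, ← card_image_of_injective _ hι, himage, Nat.card_Ico]
  have hcardU : #U = p - 1 := by
    rw [← card_image_of_injective _ hι, ← filter_image, himage, pow_succ',
      Nat.card_filter_dvd_Ico_one_mul (by omega)]
  have hwU : w ∈ U := by simp [U, hw]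
  have hxU : x ∉ U := by
    simp only [U, mem_filter, mem_univ, true_and, hx]
    exact fun h => absurd (Nat.le_of_dvd one_pos h) (by omega)
  have := hg.card_add_card_le hgK
    (fun u hu v hv => (hadj u v).2 ⟨hv.symm, dvd_mul_of_dvd_left (mem_filter.1 hu).2 _⟩) hwU hxU
  rw [hcardV, hcardU] at this
  omega

end PowDvdGraph

theorem ZMod.mul_eq_zero_iff_dvd_val_mul {m : ℕ} [NeZero m] (x y : ZMod m) :
    x * y = 0 ↔ m ∣ x.val * y.val := by
  rw [← ZMod.val_eq_zero, ZMod.val_mul, Nat.dvd_iff_mod_eq_zero]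

section ZModPrimePow

variable {p : ℕ}

theorem mem_zdVertices_zmod_prime_pow_iff (hp : p.Prime) {n : ℕ} (x : ZMod (p ^ (n + 1))) :
    x ∈ zdVertices (ZMod (p ^ (n + 1))) ↔ x ≠ 0 ∧ p ∣ x.val := by
  have : NeZero (p ^ (n + 1)) := ⟨pow_ne_zero _ hp.ne_zero⟩
  refine ⟨fun ⟨hx, y, hy, hxy⟩ => ⟨hx, ?_⟩, fun ⟨hx, hpx⟩ => ⟨hx, (p ^ n : ℕ), ?_, ?_⟩⟩
  · by_contra hpx
    have hunit : IsUnit x := by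
      rw [← ZMod.natCast_zmod_val x, ZMod.isUnit_iff_coprime]
      exact Nat.Coprime.pow_right _ ((Nat.Prime.coprime_iff_not_dvd hp).2 hpx).symm
    exact hy (hunit.mul_right_eq_zero.1 hxy)
  · rw [Ne, ZMod.natCast_eq_zero_iff, Nat.pow_dvd_pow_iff_le_right hp.one_lt]
    omega
  · rw [ZMod.mul_eq_zero_iff_dvd_val_mul,
      ZMod.val_cast_of_lt (Nat.pow_lt_pow_right hp.one_lt (lt_add_one n))]
    have := Nat.mul_dvd_mul hpx (dvd_refl (p ^ n))
    rwa [← pow_succ'] at this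

def zdIndex (p : ℕ) {m : ℕ} (x : zdVertices (ZMod m)) : ℕ :=
  (x : ZMod m).val / p

theorem p_mul_zdIndex (hp : p.Prime) {n : ℕ} (x : zdVertices (ZMod (p ^ (n + 1)))) :
    p * zdIndex p x = (x : ZMod (p ^ (n + 1))).val :=
  Nat.mul_div_cancel' ((mem_zdVertices_zmod_prime_pow_iff hp _).1 x.2).2

theorem zdIndex_injective (hp : p.Prime) {n : ℕ} :
    Injective (zdIndex p : zdVertices (ZMod (p ^ (n + 1))) → ℕ) := by
  have : NeZero (p ^ (n + 1)) := ⟨pow_ne_zero _ hp.ne_zero⟩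
  intro x y h
  refine Subtype.ext (ZMod.val_injective _ ?_)
  rw [← p_mul_zdIndex hp x, ← p_mul_zdIndex hp y, h]

theorem range_zdIndex (hp : p.Prime) {n : ℕ} :
    Set.range (zdIndex p : zdVertices (ZMod (p ^ (n + 1))) → ℕ) = Set.Ico 1 (p ^ n) := by
  have : NeZero (p ^ (n + 1)) := ⟨pow_ne_zero _ hp.ne_zero⟩
  ext j
  constructor
  · rintro ⟨x, rfl⟩
    have hval := p_mul_zdIndex hp x
    have hx0 : (x : ZMod (p ^ (n + 1))).val ≠ 0 :=
      (ZMod.val_ne_zero _).2 ((mem_zdVertices_zmod_prime_pow_iff hp _).1 x.2).1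
    have hlt : p * zdIndex p x < p * p ^ n := by
      rw [hval, ← pow_succ']
      exact ZMod.val_lt _
    refine ⟨Nat.pos_of_ne_zero fun h => hx0 ?_, Nat.lt_of_mul_lt_mul_left hlt⟩
    rw [← hval, h, mul_zero]
  · rintro ⟨hj1, hj⟩
    have hlt : p * j < p ^ (n + 1) := by
      rw [pow_succ']
      exact Nat.mul_lt_mul_of_pos_left hj hp.pos
    have hval : ((p * j : ℕ) : ZMod (p ^ (n + 1))).val = p * j := ZMod.val_cast_of_lt hlt
    have hpj : 0 < p * j := Nat.mul_pos hp.pos hj1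
    refine ⟨⟨(p * j : ℕ), (mem_zdVertices_zmod_prime_pow_iff hp _).2 ⟨?_, ?_⟩⟩, ?_⟩
    · intro h
      rw [h, ZMod.val_zero] at hval
      omega
    · rw [hval]
      exact dvd_mul_right p j
    · simp only [zdIndex, hval, Nat.mul_div_cancel_left j hp.pos]

theorem zdGraph_zmod_prime_pow_adj_iff (hp : p.Prime) {k : ℕ}
    (x y : zdVertices (ZMod (p ^ (k + 2)))) :
    (zdGraph (ZMod (p ^ (k + 2)))).Adj x y ↔ x ≠ y ∧ p ^ k ∣ zdIndex p x * zdIndex p y := by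
  have : NeZero (p ^ (k + 2)) := ⟨pow_ne_zero _ hp.ne_zero⟩
  change x ≠ y ∧ (x : ZMod (p ^ (k + 2))) * y = 0 ↔ _
  rw [ZMod.mul_eq_zero_iff_dvd_val_mul, ← p_mul_zdIndex hp x, ← p_mul_zdIndex hp y]
  refine and_congr_right' ?_
  have key : ∀ a b : ℕ, p ^ (k + 2) ∣ p * a * (p * b) ↔ p ^ k ∣ a * b := fun a b => by
    rw [show p ^ (k + 2) = p * p * p ^ k by ring, show p * a * (p * b) = p * p * (a * b) by ring,
      Nat.mul_dvd_mul_iff_left (Nat.mul_pos hp.pos hp.pos)]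
  exact key _ _

end ZModPrimePow

/-- `λ(Γ(Z_{p^n})) = p^{n-1} + p - 3` for `n ≥ 3`. -/
theorem lambda_zdGraph_zmod (p n : ℕ) (hp : p.Prime) (hn : 3 ≤ n) :
    lambdaNumber (zdGraph (ZMod (p ^ n))) = p ^ (n - 1) + p - 3 := by
  obtain ⟨k, rfl⟩ : ∃ k, n = k + 2 := ⟨n - 2, by omega⟩
  have : NeZero (p ^ (k + 2)) := ⟨pow_ne_zero _ hp.ne_zero⟩
  classical
  exact lambdaNumber_eq_of_adj_iff_pow_dvd hp (by omega) (zdIndex_injective hp) (range_zdIndex hp)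
    (zdGraph_zmod_prime_pow_adj_iff hp)
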